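/- Fix d ≥ 1. For every finite set S of n points in d-dimensional Euclidean space and every natural number F with F < ⌈n/(d+1)⌉, there exists a point K such that: for every subset N ⊆ S with |S \ N| ≤ F, every point c and real ρ with dist(p, c) ≤ ρ for all p ∈ N, and every p ∈ N, one has dist(p, K) ≤ 2ρ. (Thus in ℝ^d the gathering problem with fewer than ⌈n/(d+1)⌉ byzantine robots admits an algorithm with competitive ratio at most 2.) -/
import Mathlib

open scoped Classical

/-- Move-to-centerpoint in `ℝ^d`: for any finite set `S` of points in
`d`-dimensional Euclidean space (`d ≥ 1`) and any `F < ⌈n/(d+1)⌉`, there is a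
point `K` such that for every subset `N ⊆ S` omitting at most `F` points, and
every ball of radius `ρ` containing `N`, every point of `N` is within distance
`2ρ` of `K` (competitive ratio at most `2`). -/
theorem move_to_centerpoint_competitive_two_dim
    (d : ℕ) (hd : 1 ≤ d)
    (S : Finset (EuclideanSpace ℝ (Fin d))) (F : ℕ)
    (hF : F < ⌈(S.card : ℚ) / (d + 1)⌉₊) :
    ∃ K : EuclideanSpace ℝ (Fin d),
      ∀ N : Finset (EuclideanSpace ℝ (Fin d)), N ⊆ S → (S \ N).card ≤ F →
        ∀ (c : EuclideanSpace ℝ (Fin d)) (ρ : ℝ),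
          (∀ p ∈ N, dist p c ≤ ρ) → ∀ p ∈ N, dist p K ≤ 2 * ρ := by
  classical
  have hnF : (d + 1) * F < S.card := by
    have h1 := (Nat.lt_ceil).mp hF
    have hd1 : (0 : ℚ) < (d : ℚ) + 1 := by positivity
    rw [lt_div_iff₀ hd1] at h1
    have : ((d + 1) * F : ℚ) < (S.card : ℚ) := by push_cast; linarith
    exact_mod_cast this
  set 𝒮 : Finset (Finset (EuclideanSpace ℝ (Fin d))) :=
    S.powerset.filter (fun N => (S \ N).card ≤ F) with h𝒮
  have key : (⋂ N ∈ 𝒮, convexHull ℝ (N : Set (EuclideanSpace ℝ (Fin d)))).Nonempty := by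
    apply Convex.helly_theorem' (𝕜 := ℝ)
    · intro N _; exact convex_convexHull ℝ _
    · intro I hI hIcard
      rw [finrank_euclideanSpace_fin] at hIcard
      have hne : (S.filter (fun x => ∀ N ∈ I, x ∈ N)).Nonempty := by
        by_contra h
        rw [Finset.not_nonempty_iff_eq_empty] at h
        have hsub : S ⊆ I.biUnion (fun N => S \ N) := by
          intro x hx
          by_contra hx'
          have hxmem : x ∈ S.filter (fun x => ∀ N ∈ I, x ∈ N) := by
            simp only [Finset.mem_filter]
            refine ⟨hx, fun N hN => ?_⟩
            by_contra hxN
            exact hx' (Finset.mem_biUnion.mpr ⟨N, hN, Finset.mem_sdiff.mpr ⟨hx, hxN⟩⟩)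
          simp [h] at hxmem
        have hc1 := Finset.card_le_card hsub
        have hc2 : (I.biUnion (fun N => S \ N)).card ≤ ∑ N ∈ I, (S \ N).card :=
          Finset.card_biUnion_le
        have hc3 : ∑ N ∈ I, (S \ N).card ≤ I.card * F := by
          have := Finset.sum_le_card_nsmul I (fun N => (S \ N).card) F ?_
          · simpa using this
          · intro N hN
            have hNs := hI hN
            simp only [h𝒮, Finset.mem_filter, Finset.mem_powerset] at hNs
            exact hNs.2
        have : S.card ≤ (d + 1) * F :=
          le_trans hc1 (le_trans hc2 (le_trans hc3 (Nat.mul_le_mul_right F hIcard)))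
        omega
      obtain ⟨x, hx⟩ := hne
      rw [Finset.mem_filter] at hx
      exact ⟨x, by
        simp only [Set.mem_iInter]
        intro N hN
        exact subset_convexHull ℝ _ (hx.2 N hN)⟩
  obtain ⟨K, hK⟩ := key
  refine ⟨K, ?_⟩
  intro N hNS hNF c ρ hball p hp
  have hKN : K ∈ convexHull ℝ (N : Set (EuclideanSpace ℝ (Fin d))) := by
    simp only [Set.mem_iInter] at hK
    exact hK N (by
      simp only [h𝒮, Finset.mem_filter, Finset.mem_powerset]
      exact ⟨hNS, hNF⟩)
  have hKball : K ∈ Metric.closedBall c ρ := by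
    have hsubset : convexHull ℝ (N : Set (EuclideanSpace ℝ (Fin d))) ⊆ Metric.closedBall c ρ :=
      convexHull_min (fun x hx => hball x hx) (convex_closedBall c ρ)
    exact hsubset hKN
  have hKc := Metric.mem_closedBall.mp hKball
  calc dist p K ≤ dist p c + dist c K := dist_triangle p c K
    _ ≤ ρ + ρ := add_le_add (hball p hp) (by rwa [dist_comm])
    _ = 2 * ρ := by ring
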